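/- Let p ≥ 2 be an integer, a₁,…,aᵢ ∈ ℝ^d, and let áⱼ = vec(aⱼ^{⊗⌈p/2⌉}) ∈ ℝ^{d^{⌈p/2⌉}} with Áᵢ the matrix with rows áⱼᵀ. Then for odd p and every x with Aᵢx ≠ 0, |aᵢᵀx|^p / Σ_{j=1}^i |aⱼᵀx|^p ≤ ‖úᵢ‖^{2p/(p+1)}, where úᵢ is the i-th row of the orthonormal-column factor U of a thin SVD of Áᵢ. -/
import Mathlib

open Matrix

/-- The four Moore–Penrose conditions characterizing the pseudoinverse,
for square matrices over an arbitrary (finite) index type. -/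
def IsMoorePenroseInv {ι : Type*} [Fintype ι] [DecidableEq ι]
    (A B : Matrix ι ι ℝ) : Prop :=
  A * B * A = A ∧ B * A * B = B ∧ (A * B)ᵀ = A * B ∧ (B * A)ᵀ = B * A

/-- The vectorized `q`-fold tensor power of a vector `x ∈ ℝ^d`. -/
def tensorPow {d : ℕ} (x : Fin d → ℝ) (q : ℕ) : (Fin q → Fin d) → ℝ :=
  fun f => ∏ i, x (f i)

/-- From `(AᵀA) P (AᵀA) = AᵀA` we get `A P (AᵀA) = A`. -/
lemma aux_APM {ι κ : Type*} [Fintype ι] [Fintype κ]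
    (Ak : Matrix ι κ ℝ) (P : Matrix κ κ ℝ)
    (h : (Akᵀ * Ak) * P * (Akᵀ * Ak) = Akᵀ * Ak) :
    Ak * P * (Akᵀ * Ak) = Ak := by
  have h' : Akᵀ * (Ak * (P * (Akᵀ * Ak))) = Akᵀ * Ak := by
    simpa only [Matrix.mul_assoc] using h
  have hz : (Ak * P * (Akᵀ * Ak) - Ak)ᴴ * (Ak * P * (Akᵀ * Ak) - Ak) = 0 := by
    have ht : (Ak * P * (Akᵀ * Ak) - Ak)ᴴ = (Ak * P * (Akᵀ * Ak) - Ak)ᵀ := by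
      ext i j
      simp [Matrix.conjTranspose_apply]
    rw [ht]
    simp only [Matrix.transpose_sub, Matrix.transpose_mul, Matrix.transpose_transpose,
      Matrix.sub_mul, Matrix.mul_sub, Matrix.mul_assoc, h']
    abel
  exact sub_eq_zero.mp (Matrix.conjTranspose_mul_self_eq_zero.mp hz)

/-- Transposed sandwich identity. -/
lemma aux_sandwich {ι κ : Type*} [Fintype ι] [Fintype κ]
    (Ak : Matrix ι κ ℝ) (P : Matrix κ κ ℝ)
    (h1 : Ak * P * (Akᵀ * Ak) = Ak) :
    Ak * Pᵀ * Akᵀ = Ak * P * Akᵀ := by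
  have h1t : Akᵀ * (Ak * (Pᵀ * Akᵀ)) = Akᵀ := by
    simpa only [Matrix.transpose_mul, Matrix.transpose_transpose, Matrix.mul_assoc]
      using congrArg Matrix.transpose h1
  calc Ak * Pᵀ * Akᵀ = Ak * P * (Akᵀ * Ak) * Pᵀ * Akᵀ := by rw [h1]
    _ = Ak * (P * (Akᵀ * (Ak * (Pᵀ * Akᵀ)))) := by simp only [Matrix.mul_assoc]
    _ = Ak * (P * Akᵀ) := by rw [h1t]
    _ = Ak * P * Akᵀ := by rw [Matrix.mul_assoc]

set_option maxHeartbeats 1000000 in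
/-- Kernelized online sensitivity bound for odd `p`: with `áⱼ = vec(aⱼ^{⊗(p+1)/2})`,
`Á` the matrix of kernelized rows and `P = (ÁᵀÁ)⁺`, the online sensitivity of the
last row is at most `‖úᵢ‖^{2p/(p+1)} = (áᵢᵀ(ÁᵀÁ)⁺áᵢ)^{p/(p+1)}` (the quantity
`áᵢᵀ(ÁᵀÁ)⁺áᵢ` being the squared norm of the `i`-th row of the orthonormal factor
of a thin SVD of `Á`). -/
theorem kernel_online_sensitivity_le
    {d m : ℕ} (p : ℕ) (hp : 3 ≤ p) (hpo : Odd p)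
    (a : Fin (m + 1) → Fin d → ℝ)
    (A : Matrix (Fin (m + 1)) (Fin d) ℝ) (hA : ∀ j, A j = a j)
    (Ak : Matrix (Fin (m + 1)) (Fin ((p + 1) / 2) → Fin d) ℝ)
    (hAk : ∀ j, Ak j = tensorPow (a j) ((p + 1) / 2))
    (P : Matrix (Fin ((p + 1) / 2) → Fin d) (Fin ((p + 1) / 2) → Fin d) ℝ)
    (hP : IsMoorePenroseInv (Akᵀ * Ak) P) :
    ∀ x : Fin d → ℝ, A *ᵥ x ≠ 0 →
      |a (Fin.last m) ⬝ᵥ x| ^ p / ∑ j, |a j ⬝ᵥ x| ^ p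
        ≤ (Ak (Fin.last m) ⬝ᵥ (P *ᵥ Ak (Fin.last m))) ^ ((p : ℝ) / ((p : ℝ) + 1)) := by
  intro x hx
  have hq2 : 2 * ((p + 1) / 2) = p + 1 := by obtain ⟨k, hk⟩ := hpo; omega
  have h1 : Ak * P * (Akᵀ * Ak) = Ak := aux_APM Ak P hP.1
  have h2 : Ak * Pᵀ * Akᵀ = Ak * P * Akᵀ := aux_sandwich Ak P h1
  have h1t : Akᵀ * (Ak * (Pᵀ * Akᵀ)) = Akᵀ := by
    simpa only [Matrix.transpose_mul, Matrix.transpose_transpose, Matrix.mul_assoc]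
      using congrArg Matrix.transpose h1
  -- notation
  set e : Fin (m + 1) → ℝ := Pi.single (Fin.last m) 1 with he
  set s : Fin (m + 1) → ℝ := fun j => a j ⬝ᵥ x with hs
  set y : (Fin ((p + 1) / 2) → Fin d) → ℝ := tensorPow x ((p + 1) / 2) with hy
  set u : Fin (m + 1) → ℝ := (Ak * Pᵀ * Akᵀ) *ᵥ e with hu
  set v : Fin (m + 1) → ℝ := Ak *ᵥ y with hv
  have hc : Akᵀ *ᵥ e = Ak (Fin.last m) := by
    rw [he, Matrix.mulVec_single]
    ext k; simp
  -- kernel identity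
  have hker : ∀ j, Ak j ⬝ᵥ y = s j ^ ((p + 1) / 2) := by
    intro j
    rw [hAk j]
    have : s j ^ ((p + 1) / 2) = ∑ f : Fin ((p + 1) / 2) → Fin d, ∏ i, (a j (f i) * x (f i)) :=
      Fintype.sum_pow (fun k => a j k * x k) ((p + 1) / 2)
    rw [this]
    simp [dotProduct, hy, tensorPow, Finset.prod_mul_distrib]
  have hvj : ∀ j, v j = s j ^ ((p + 1) / 2) := by
    intro j
    rw [hv]
    exact hker j
  -- tau
  set τ : ℝ := Ak (Fin.last m) ⬝ᵥ (P *ᵥ Ak (Fin.last m)) with hτ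
  have hτe : τ = ((Ak * P * Akᵀ) *ᵥ e) ⬝ᵥ e := by
    calc τ = (Akᵀ *ᵥ e) ⬝ᵥ (P *ᵥ (Akᵀ *ᵥ e)) := by rw [hτ, hc]
      _ = ((P * Akᵀ) *ᵥ e) ⬝ᵥ (Akᵀ *ᵥ e) := by
          rw [Matrix.mulVec_mulVec, dotProduct_comm]
      _ = (((P * Akᵀ) *ᵥ e) ᵥ* Akᵀ) ⬝ᵥ e := by rw [Matrix.dotProduct_mulVec]
      _ = (Ak *ᵥ ((P * Akᵀ) *ᵥ e)) ⬝ᵥ e := by rw [Matrix.vecMul_transpose]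
      _ = ((Ak * (P * Akᵀ)) *ᵥ e) ⬝ᵥ e := by rw [Matrix.mulVec_mulVec]
      _ = ((Ak * P * Akᵀ) *ᵥ e) ⬝ᵥ e := by rw [Matrix.mul_assoc]
  -- τ = ∑ u j ^ 2
  have huu : ∑ j, u j ^ 2 = τ := by
    have : ∑ j, u j ^ 2 = u ⬝ᵥ u := by
      simp [dotProduct, sq]
    have h3 : (Ak * Pᵀ * Akᵀ)ᵀ * (Ak * Pᵀ * Akᵀ) = Ak * P * Akᵀ := by
      calc (Ak * Pᵀ * Akᵀ)ᵀ * (Ak * Pᵀ * Akᵀ)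
          = Ak * (P * (Akᵀ * (Ak * (Pᵀ * Akᵀ)))) := by
            simp only [Matrix.transpose_mul, Matrix.transpose_transpose, Matrix.mul_assoc]
        _ = Ak * (P * Akᵀ) := by rw [h1t]
        _ = Ak * P * Akᵀ := by rw [Matrix.mul_assoc]
    calc ∑ j, u j ^ 2 = u ⬝ᵥ u := this
      _ = (u ᵥ* (Ak * Pᵀ * Akᵀ)) ⬝ᵥ e := by rw [hu, Matrix.dotProduct_mulVec]
      _ = (((Ak * Pᵀ * Akᵀ)ᵀ) *ᵥ u) ⬝ᵥ e := by rw [Matrix.mulVec_transpose]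
      _ = (((Ak * Pᵀ * Akᵀ)ᵀ * (Ak * Pᵀ * Akᵀ)) *ᵥ e) ⬝ᵥ e := by
          rw [hu, Matrix.mulVec_mulVec]
      _ = ((Ak * P * Akᵀ) *ᵥ e) ⬝ᵥ e := by rw [h3]
      _ = τ := hτe.symm
  -- ∑ u j * v j = Ak last ⬝ y
  have huv : ∑ j, u j * v j = Ak (Fin.last m) ⬝ᵥ y := by
    have h4 : Akᵀ * (Ak * Pᵀ * Akᵀ) = Akᵀ := by
      calc Akᵀ * (Ak * Pᵀ * Akᵀ) = Akᵀ * (Ak * (Pᵀ * Akᵀ)) := by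
            simp only [Matrix.mul_assoc]
        _ = Akᵀ := h1t
    calc ∑ j, u j * v j = u ⬝ᵥ v := rfl
      _ = (u ᵥ* Ak) ⬝ᵥ y := by rw [hv, Matrix.dotProduct_mulVec]
      _ = (Akᵀ *ᵥ u) ⬝ᵥ y := by rw [Matrix.mulVec_transpose]
      _ = ((Akᵀ * (Ak * Pᵀ * Akᵀ)) *ᵥ e) ⬝ᵥ y := by rw [hu, Matrix.mulVec_mulVec]
      _ = (Akᵀ *ᵥ e) ⬝ᵥ y := by rw [h4]
      _ = Ak (Fin.last m) ⬝ᵥ y := by rw [hc]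
  -- Cauchy–Schwarz
  have hCS : (Ak (Fin.last m) ⬝ᵥ y) ^ 2 ≤ τ * ∑ j, v j ^ 2 := by
    rw [← huv, ← huu]
    exact Finset.sum_mul_sq_le_sq_mul_sq Finset.univ u v
  have hτnn : 0 ≤ τ := by
    rw [← huu]; exact Finset.sum_nonneg fun j _ => sq_nonneg _
  -- convert to powers of |s j|
  have hevenp1 : Even (p + 1) := Odd.add_one hpo
  have habs : ∀ r : ℝ, |r| ^ (p + 1) = (r ^ ((p + 1) / 2)) ^ 2 := by
    intro r
    rw [hevenp1.pow_abs, ← pow_mul, mul_comm ((p + 1) / 2) 2, hq2]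
  have key1 : |s (Fin.last m)| ^ (p + 1) ≤ τ * ∑ j, |s j| ^ (p + 1) := by
    rw [habs]
    calc (s (Fin.last m) ^ ((p + 1) / 2)) ^ 2 = (Ak (Fin.last m) ⬝ᵥ y) ^ 2 := by
          rw [← hker (Fin.last m)]
      _ ≤ τ * ∑ j, v j ^ 2 := hCS
      _ = τ * ∑ j, |s j| ^ (p + 1) := by
          congr 1
          refine Finset.sum_congr rfl fun j _ => ?_
          rw [hvj j, ← habs]
  -- positivity of the denominator
  set S : ℝ := ∑ j, |s j| ^ p with hS
  have hSpos : 0 < S := by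
    obtain ⟨j, hj⟩ : ∃ j, (A *ᵥ x) j ≠ 0 := Function.ne_iff.mp hx
    have hsj : s j ≠ 0 := by
      rw [hs]; simpa [Matrix.mulVec, hA j] using hj
    refine Finset.sum_pos' (fun i _ => by positivity) ⟨j, Finset.mem_univ j, ?_⟩
    positivity
  have hppos : (0:ℝ) < p := by positivity
  -- ℓ_{p+1} vs ℓ_p : ∑ |s j|^{p+1} ≤ S^{1/p} * S
  set R : ℝ := S ^ ((1:ℝ) / p) with hR
  have hRnn : 0 ≤ R := Real.rpow_nonneg hSpos.le _
  have hle : ∀ j, |s j| ≤ R := by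
    intro j
    have h0 : |s j| ^ p ≤ S := by
      rw [hS]
      exact Finset.single_le_sum (f := fun i => |s i| ^ p) (fun i _ => by positivity)
        (Finset.mem_univ j)
    have := Real.rpow_le_rpow (by positivity) h0 (by positivity : (0:ℝ) ≤ 1 / p)
    rwa [← Real.rpow_natCast |s j| p, ← Real.rpow_mul (abs_nonneg _),
      mul_one_div, div_self (ne_of_gt hppos), Real.rpow_one] at this
  have key2 : ∑ j, |s j| ^ (p + 1) ≤ R * S := by
    calc ∑ j, |s j| ^ (p + 1) = ∑ j, |s j| * |s j| ^ p := by
          refine Finset.sum_congr rfl fun j _ => ?_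
          rw [pow_succ, mul_comm]
      _ ≤ ∑ j, R * |s j| ^ p := by
          refine Finset.sum_le_sum fun j _ => ?_
          exact mul_le_mul_of_nonneg_right (hle j) (by positivity)
      _ = R * S := by rw [← Finset.mul_sum]
  have key : |s (Fin.last m)| ^ (p + 1) ≤ τ * (R * S) :=
    key1.trans (mul_le_mul_of_nonneg_left key2 hτnn)
  -- final rpow manipulation
  set t : ℝ := |s (Fin.last m)| with ht
  have htnn : (0:ℝ) ≤ t := abs_nonneg _
  set α : ℝ := (p : ℝ) / ((p : ℝ) + 1) with hα
  have hαnn : 0 ≤ α := by positivity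
  have hp1ne : ((p:ℝ) + 1) ≠ 0 := by positivity
  have hRS : R * S = S ^ (((p:ℝ) + 1) / p) := by
    have hexp : ((p:ℝ) + 1) / p = 1 / p + 1 := by field_simp; ring
    rw [hexp, Real.rpow_add hSpos, Real.rpow_one, hR]
  have main : t ^ p ≤ τ ^ α * S := by
    have hmono := Real.rpow_le_rpow (by positivity : (0:ℝ) ≤ t ^ (p+1)) key hαnn
    have hL : (t ^ (p + 1)) ^ α = t ^ p := by
      rw [← Real.rpow_natCast t (p + 1), ← Real.rpow_mul htnn, hα]
      rw [← Real.rpow_natCast t p]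
      congr 1
      push_cast
      field_simp
    have hRSα : (R * S) ^ α = S := by
      rw [hRS, ← Real.rpow_mul hSpos.le, hα]
      rw [div_mul_div_comm, mul_comm ((p:ℝ)+1) (p:ℝ)]
      rw [div_self (by positivity), Real.rpow_one]
    rwa [hL, Real.mul_rpow hτnn (by positivity), hRSα] at hmono
  rw [div_le_iff₀ hSpos]
  exact main
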